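/- Proposition 3 (offline support-induced indistinguishability, core claim): in the branch MDP, for any representation φ satisfying the aliasing condition φ(u_t) = φ(v_t) for all t = 1,…,H, the represented observable data under the two initial actions coincide: the represented block (φ(u_1), φ(u_2), …, φ(u_H)) observed under action L equals the represented block (φ(v_1), φ(v_2), …, φ(v_H)) observed under action R, and no observable window contains u_{H+1}, v_{H+1}, g, or b. Yet the full-horizon returns differ: the return under L is 1 and the return under R is 0. Hence the two initial actions induce identical observable represented window data but different returns, so the problem is not H-sufficient under representation φ. -/

import Mathlib

/-- States of the branch MDP: the initial state `s0`, the two chains `u t`, `v t`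
(used for `1 ≤ t ≤ H+1`), and the terminals `g`, `b`. -/
inductive BState : Type where
  | s0 : BState
  | u : ℕ → BState
  | v : ℕ → BState
  | g : BState
  | b : BState
deriving DecidableEq

/-- Trajectory induced by the initial action `L`: `s_0, u_1, …, u_{H+1}, g`. -/
def tauL (H : ℕ) (t : ℕ) : BState :=
  if t = 0 then .s0 else if t ≤ H + 1 then .u t else .g

/-- Trajectory induced by the initial action `R`: `s_0, v_1, …, v_{H+1}, b`. -/
def tauR (H : ℕ) (t : ℕ) : BState :=
  if t = 0 then .s0 else if t ≤ H + 1 then .v t else .b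

/-- Reward sequence under `L`: `1` on the final transition into `g`, `0` elsewhere. -/
def rewL (H : ℕ) (t : ℕ) : ℝ := if t = H + 1 then 1 else 0

/-- Reward sequence under `R`: identically `0`. -/
def rewR (H : ℕ) (t : ℕ) : ℝ := 0

/-- Full-horizon return: the sum of the rewards over the `H+2` steps. -/
def ret (H : ℕ) (r : ℕ → ℝ) : ℝ := ∑ t ∈ Finset.range (H + 2), r t

theorem tauL_eq_u {H t : ℕ} (h1 : 1 ≤ t) (h2 : t ≤ H + 1) : tauL H t = .u t := by
  simp [tauL, Nat.one_le_iff_ne_zero.mp h1, h2]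

theorem tauR_eq_v {H t : ℕ} (h1 : 1 ≤ t) (h2 : t ≤ H + 1) : tauR H t = .v t := by
  simp [tauR, Nat.one_le_iff_ne_zero.mp h1, h2]

theorem ret_rewL (H : ℕ) : ret H (rewL H) = 1 := by
  simp [ret, rewL]

theorem ret_rewR (H : ℕ) : ret H (rewR H) = 0 :=
  Finset.sum_const_zero

theorem branch_aliasing_indistinguishable_general (H : ℕ)
    {X : Type*} (φ : BState → X)
    (halias : ∀ t, 1 ≤ t → t ≤ H → φ (.u t) = φ (.v t)) :
    (∀ t, 1 ≤ t → t ≤ H → φ (tauL H t) = φ (tauR H t)) ∧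
    (∀ t, 1 ≤ t → t ≤ H →
      tauL H t ≠ .u (H + 1) ∧ tauL H t ≠ .v (H + 1) ∧ tauL H t ≠ .g ∧ tauL H t ≠ .b ∧
      tauR H t ≠ .u (H + 1) ∧ tauR H t ≠ .v (H + 1) ∧ tauR H t ≠ .g ∧ tauR H t ≠ .b) ∧
    ret H (rewL H) = 1 ∧ ret H (rewR H) = 0 ∧
    ¬ (∀ p q : Bool,
        (∀ t, 1 ≤ t → t ≤ H →
          φ ((if p then tauL H else tauR H) t) = φ ((if q then tauL H else tauR H) t)) →
        ret H (if p then rewL H else rewR H) = ret H (if q then rewL H else rewR H)) := by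
  have hwindow : ∀ t, 1 ≤ t → t ≤ H → φ (tauL H t) = φ (tauR H t) := fun t h1 h2 => by
    rw [tauL_eq_u h1 (by omega), tauR_eq_v h1 (by omega)]
    exact halias t h1 h2
  refine ⟨hwindow, fun t h1 h2 => ?_, ret_rewL H, ret_rewR H, fun hsufficient => ?_⟩
  · rw [tauL_eq_u h1 (by omega), tauR_eq_v h1 (by omega)]
    simp only [ne_eq, BState.u.injEq, BState.v.injEq, reduceCtorEq, not_false_eq_true, and_true,
      true_and]
    omega
  · have hret := hsufficient true false hwindow
    simp only [Bool.false_eq_true, if_true, if_false, ret_rewL, ret_rewR] at hret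
    exact one_ne_zero hret

/-- **Proposition 3, core claim.** For any representation `φ`
satisfying the aliasing condition `φ(u_t) = φ(v_t)` for `t = 1,…,H`, the
represented observable data under the two initial actions coincide (the observable
windows cover exactly the times `1,…,H`, where `τ_L(t) = u_t` and `τ_R(t) = v_t`,
so in particular no observable window contains `u_{H+1}`, `v_{H+1}`, `g`, or `b`),
yet the full-horizon returns differ (`1` under `L`, `0` under `R`).  Hence the
problem is not `H`-sufficient under the representation `φ`: it is not the case
that any two policies with identical observable represented window data have
equal returns. -/
theorem branch_aliasing_indistinguishable (H : ℕ) (hH : 1 ≤ H)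
    {X : Type*} (φ : BState → X)
    (halias : ∀ t, 1 ≤ t → t ≤ H → φ (.u t) = φ (.v t)) :
    (∀ t, 1 ≤ t → t ≤ H → φ (tauL H t) = φ (tauR H t)) ∧
    (∀ t, 1 ≤ t → t ≤ H →
      tauL H t ≠ .u (H + 1) ∧ tauL H t ≠ .v (H + 1) ∧ tauL H t ≠ .g ∧ tauL H t ≠ .b ∧
      tauR H t ≠ .u (H + 1) ∧ tauR H t ≠ .v (H + 1) ∧ tauR H t ≠ .g ∧ tauR H t ≠ .b) ∧
    ret H (rewL H) = 1 ∧ ret H (rewR H) = 0 ∧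
    ¬ (∀ p q : Bool,
        (∀ t, 1 ≤ t → t ≤ H →
          φ ((if p then tauL H else tauR H) t) = φ ((if q then tauL H else tauR H) t)) →
        ret H (if p then rewL H else rewR H) = ret H (if q then rewL H else rewR H)) :=
  branch_aliasing_indistinguishable_general H φ halias
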